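/- arXiv:1408.5689 — 2 statements merged into one kernel-verified Lean document; each statement's English description precedes it below -/
import Mathlib

section
/- Let n ≥ 1 be an integer and let S be a χ²-random variable with n degrees of freedom. Then for every real x > 0 one has Pr[n − S ≥ 2√(n·x)] ≤ e^{−x}. -/
open MeasureTheory ProbabilityTheory Real

/-!
Chernoff's bound applied to `-S` with parameter `t = √(x / n)`: since
`𝔼[exp (-t S)] = (1 + 2t)^(-n/2) ≤ exp (n (t² - t))` by `log (1 + u) ≥ u - u² / 2`,
one gets `Pr[S ≤ n - ε] ≤ exp (n t² - t ε)`, which is `exp (-x)` for `ε = 2 √(n x)`.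
-/

lemma inv_sqrt_one_add_two_mul_le_exp {t : ℝ} (ht : 0 ≤ t) :
    (√(1 + 2 * t))⁻¹ ≤ exp (t ^ 2 - t) := by
  have hlog : 2 * t - 2 * t ^ 2 ≤ log (1 + 2 * t) := by
    have h := le_log_one_add_of_nonneg (by positivity : 0 ≤ 2 * t)
    have : 2 * t - 2 * t ^ 2 ≤ 2 * (2 * t) / (2 * t + 2) := by
      rw [le_div_iff₀ (by positivity)]
      nlinarith [pow_nonneg ht 3]
    linarith
  have hexp : exp (t - t ^ 2) ≤ √(1 + 2 * t) := by
    rw [← sqrt_sq (exp_pos _).le, ← exp_nat_mul]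
    refine sqrt_le_sqrt ((exp_le_exp.2 ?_).trans_eq (exp_log (by positivity)))
    push_cast
    linarith
  rw [show t ^ 2 - t = -(t - t ^ 2) by ring, exp_neg]
  exact inv_anti₀ (exp_pos _) hexp

-- For `s ≥ 1 / 2` both sides are junk `0`: the integrand is not integrable and `√` vanishes on
-- nonpositive numbers.
lemma integral_exp_mul_sq_gaussianReal (s : ℝ) :
    ∫ y, exp (s * y ^ 2) ∂gaussianReal 0 1 = (√(1 - 2 * s))⁻¹ := by
  have hdensity : ∀ y : ℝ, gaussianPDFReal 0 1 y * exp (s * y ^ 2)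
      = (√(2 * π))⁻¹ * exp (-(1 / 2 - s) * y ^ 2) := by
    intro y
    rw [gaussianPDFReal_def, mul_assoc, ← exp_add]
    simp only [NNReal.coe_one, mul_one, sub_zero]
    congr 2
    ring
  simp_rw [integral_gaussianReal_eq_integral_smul one_ne_zero, smul_eq_mul, hdensity,
    integral_const_mul, integral_gaussian, ← sqrt_inv,
    ← sqrt_mul (inv_nonneg.2 (by positivity : (0:ℝ) ≤ 2 * π))]
  congr 1
  field_simp

section ChiSquared

variable {Ω ι : Type*} [MeasurableSpace Ω] {μ : Measure Ω}

lemma aemeasurable_of_map_eq_gaussianReal {X : Ω → ℝ} {m : ℝ} {v : NNReal}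
    (hX : μ.map X = gaussianReal m v) : AEMeasurable X μ :=
  .of_map_ne_zero (hX ▸ IsProbabilityMeasure.ne_zero _)

lemma mgf_sq_of_map_eq_gaussianReal {X : Ω → ℝ} (hX : μ.map X = gaussianReal 0 1) (s : ℝ) :
    mgf (fun ω => X ω ^ 2) μ s = (√(1 - 2 * s))⁻¹ := by
  rw [mgf, ← integral_exp_mul_sq_gaussianReal, ← hX,
    integral_map (aemeasurable_of_map_eq_gaussianReal hX) (by fun_prop)]

lemma mgf_sum_sq_of_iIndepFun [Fintype ι] {G : ι → Ω → ℝ}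
    (hG : ∀ i, μ.map (G i) = gaussianReal 0 1) (hindep : iIndepFun G μ) (s : ℝ) :
    mgf (fun ω => ∑ i, G i ω ^ 2) μ s = (√(1 - 2 * s))⁻¹ ^ Fintype.card ι := by
  have hGm : ∀ i, AEMeasurable (G i) μ := fun i => aemeasurable_of_map_eq_gaussianReal (hG i)
  have hsq : iIndepFun (fun i ω => G i ω ^ 2) μ :=
    hindep.comp (fun _ y => y ^ 2) (fun _ => by fun_prop)
  have := hsq.mgf_sum₀ (t := s) (fun i => (hGm i).pow_const 2) Finset.univ
  simp_rw [Finset.sum_fn, mgf_sq_of_map_eq_gaussianReal (hG _)] at this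
  simpa using this

lemma measureReal_sum_sq_le_card_sub_le_exp [IsProbabilityMeasure μ] [Fintype ι] {G : ι → Ω → ℝ}
    (hG : ∀ i, μ.map (G i) = gaussianReal 0 1) (hindep : iIndepFun G μ) (ε : ℝ) {t : ℝ}
    (ht : 0 ≤ t) :
    μ.real {ω | ∑ i, G i ω ^ 2 ≤ Fintype.card ι - ε}
      ≤ exp (Fintype.card ι * t ^ 2 - t * ε) := by
  have hGm : ∀ i, AEMeasurable (G i) μ := fun i => aemeasurable_of_map_eq_gaussianReal (hG i)
  have hint : Integrable (fun ω => exp (-t * ∑ i, G i ω ^ 2)) μ := by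
    refine .mono' (integrable_const 1) (by fun_prop) (ae_of_all _ fun ω => ?_)
    rw [norm_of_nonneg (exp_pos _).le, exp_le_one_iff]
    exact mul_nonpos_of_nonpos_of_nonneg (neg_nonpos.2 ht) (by positivity)
  calc μ.real {ω | ∑ i, G i ω ^ 2 ≤ Fintype.card ι - ε}
      ≤ exp (-(-t) * (Fintype.card ι - ε)) * mgf (fun ω => ∑ i, G i ω ^ 2) μ (-t) :=
        measure_le_le_exp_mul_mgf _ (neg_nonpos.2 ht) hint
    _ = exp (t * (Fintype.card ι - ε)) * (√(1 + 2 * t))⁻¹ ^ Fintype.card ι := by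
        rw [mgf_sum_sq_of_iIndepFun hG hindep, neg_neg, mul_neg, sub_neg_eq_add]
    _ ≤ exp (t * (Fintype.card ι - ε)) * exp (t ^ 2 - t) ^ Fintype.card ι := by
        gcongr
        exact inv_sqrt_one_add_two_mul_le_exp ht
    _ = exp (Fintype.card ι * t ^ 2 - t * ε) := by
        rw [← exp_nat_mul, ← exp_add]
        ring_nf

end ChiSquared

theorem chiSq_lower_tail_general
    {Ω : Type*} [MeasurableSpace Ω] (μ : Measure Ω) [IsProbabilityMeasure μ]
    (n : ℕ) (hn : 1 ≤ n) (G : Fin n → Ω → ℝ)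
    (hgauss : ∀ i, Measure.map (G i) μ = gaussianReal 0 1)
    (hindep : iIndepFun G μ)
    (S : Ω → ℝ) (hS : ∀ ω, S ω = ∑ i, (G i ω) ^ 2)
    (x : ℝ) (hx : 0 < x) :
    μ {ω | 2 * Real.sqrt (n * x) ≤ (n : ℝ) - S ω} ≤ ENNReal.ofReal (Real.exp (-x)) := by
  have hn0 : (0 : ℝ) < n := by exact_mod_cast hn
  set t := √(x / n)
  have hexponent : n * t ^ 2 - t * (2 * √(n * x)) = -x := by
    have htn : t * √(n * x) = x := by
      rw [← sqrt_mul (by positivity), show x / n * (n * x) = x ^ 2 by field_simp,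
        sqrt_sq hx.le]
    rw [sq_sqrt (by positivity), mul_div_cancel₀ x hn0.ne']
    linarith
  have hset : {ω | 2 * √(n * x) ≤ (n : ℝ) - S ω}
      = {ω | ∑ i, G i ω ^ 2 ≤ Fintype.card (Fin n) - 2 * √(n * x)} := by
    ext ω
    simp only [Set.mem_ofPred_eq, hS, Fintype.card_fin]
    constructor <;> intro h <;> linarith
  rw [hset, ← ofReal_measureReal, ← hexponent]
  gcongr
  simpa only [Fintype.card_fin] using
    measureReal_sum_sq_le_card_sub_le_exp hgauss hindep (2 * √(n * x)) (sqrt_nonneg (x / n))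

/-- **Lower tail bound for the χ² distribution (Laurent–Massart).**
If `S = ∑ i, (G i)²` where `G 1, …, G n` are i.i.d. standard real Gaussians, then for
every `x > 0`, `Pr[n - S ≥ 2√(n x)] ≤ exp (-x)`. -/
theorem chiSq_lower_tail
    {Ω : Type*} [MeasurableSpace Ω] (μ : Measure Ω) [IsProbabilityMeasure μ]
    (n : ℕ) (hn : 1 ≤ n) (G : Fin n → Ω → ℝ)
    (hmeas : ∀ i, Measurable (G i))
    (hgauss : ∀ i, Measure.map (G i) μ = gaussianReal 0 1)
    (hindep : iIndepFun G μ)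
    (S : Ω → ℝ) (hS : ∀ ω, S ω = ∑ i, (G i ω) ^ 2)
    (x : ℝ) (hx : 0 < x) :
    μ {ω | 2 * Real.sqrt (n * x) ≤ (n : ℝ) - S ω} ≤ ENNReal.ofReal (Real.exp (-x)) :=
  chiSq_lower_tail_general μ n hn G hgauss hindep S hS x hx
end

section
/- Let m ≥ 1 and n ≥ 2 be integers, and let U₁, …, Uₙ be independent identically distributed random variables taking values in the finite alphabet {1, …, m}, with distribution p_i = Pr[U₁ = i] and Shannon entropy H(p) = −Σ_{i=1}^m p_i·log₂ p_i. Let p̂_i = (1/n)·#{k : U_k = i} be the empirical frequencies and Ĥ_MLE = −Σ_{i=1}^m p̂_i·log₂ p̂_i the empirical (maximum-likelihood) entropy. Then for every real ε with 0 < ε ≤ 1, one has Pr[ H(p) ≤ Ĥ_MLE − √(2·(log₂ n)²·ln(2/ε)/n) ] ≤ ε. -/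
/-!
Work in nats, with `negMulLog x = -x log x`. Changing one of the `n` samples moves one count
up by one and another down by one, and `|negMulLog ((j + 1) / n) - negMulLog (j / n)| ≤ log n / n`,
so the empirical entropy has bounded differences `2 log n / n`. McDiarmid's inequality then gives
`Pr[Ĥ ≥ E Ĥ + t] ≤ exp (-n t² / (2 (log n)²))`, and `E Ĥ ≤ H(p)` by Jensen's inequality for the
concave `negMulLog`, since `E p̂ᵢ = pᵢ`. McDiarmid's inequality is proved for the product law on
`Fin n → κ` by conditioning on all coordinates but the first: the conditional increment has mean
zero and range at most `c`, so Hoeffding's lemma bounds its moment generating function.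
-/

open MeasureTheory ProbabilityTheory Real Finset

theorem sum_mul_exp_le_of_mem_Icc_of_sum_mul_eq_zero {κ : Type*} [Fintype κ] {w X : κ → ℝ}
    (hw : w ∈ stdSimplex ℝ κ) {A B : ℝ} (hX : ∀ a, X a ∈ Set.Icc A B)
    (hmean : ∑ a, w a * X a = 0) (s : ℝ) :
    ∑ a, w a * exp (s * X a) ≤ exp ((B - A) ^ 2 * s ^ 2 / 8) := by
  let ν : Measure ℝ := ∑ a, ENNReal.ofReal (w a) • Measure.dirac (X a)
  have integral_ν (g : ℝ → ℝ) : ∫ y, g y ∂ν = ∑ a, w a * g (X a) := by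
    rw [integral_finsetSum_measure fun a _ =>
      (integrable_dirac enorm_lt_top).smul_measure ENNReal.ofReal_ne_top]
    simp [ENNReal.toReal_ofReal (hw.1 _)]
  have : IsProbabilityMeasure ν :=
    ⟨by simp [ν, ← ENNReal.ofReal_sum_of_nonneg fun a _ => hw.1 a, hw.2]⟩
  have hν : ∀ᵐ y ∂ν, y ∈ Set.Icc A B := by
    simp [ν, ae_iff, Measure.dirac_apply, fun a => (hX a).1, fun a => (hX a).2]
  have h := (hasSubgaussianMGF_of_mem_Icc_of_integral_eq_zero (X := id) aemeasurable_id hν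
    (by simpa [integral_ν] using hmean)).mgf_le s
  simp only [mgf, integral_ν, id] at h
  convert h using 2
  push_cast
  rw [Real.norm_eq_abs, div_pow, sq_abs]
  ring

section IidWeight

variable {κ : Type*} {n : ℕ}

theorem sum_pi_fin_succ [Fintype κ] {M : Type*} [AddCommMonoid M] (F : (Fin (n + 1) → κ) → M) :
    ∑ x, F x = ∑ a, ∑ y, F (Fin.cons a y) := by
  rw [← Fintype.sum_prod_type',
    Fintype.sum_equiv (Fin.consEquiv fun _ => κ) (fun p => F (Fin.cons p.1 p.2)) F fun _ => rfl]

noncomputable def iidWeight (w : κ → ℝ) (x : Fin n → κ) : ℝ := ∏ k, w (x k)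

noncomputable def iidMean [Fintype κ] (w : κ → ℝ) (f : (Fin n → κ) → ℝ) : ℝ :=
  ∑ x, iidWeight w x * f x

variable {w : κ → ℝ}

theorem iidWeight_cons (a : κ) (y : Fin n → κ) :
    iidWeight w (Fin.cons a y) = w a * iidWeight w y := by
  simp [iidWeight, Fin.prod_univ_succ]

variable [Fintype κ]

theorem iidWeight_mem_stdSimplex (hw : w ∈ stdSimplex ℝ κ) :
    (iidWeight w : (Fin n → κ) → ℝ) ∈ stdSimplex ℝ (Fin n → κ) :=
  ⟨fun x => prod_nonneg fun k _ => hw.1 (x k), by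
    simp [iidWeight, ← Fintype.prod_sum, hw.2]⟩

theorem iidMean_eq_iidMean_sum_cons (f : (Fin (n + 1) → κ) → ℝ) :
    iidMean w f = iidMean w (fun y => ∑ a, w a * f (Fin.cons a y)) := by
  simp only [iidMean, sum_pi_fin_succ (fun x => iidWeight w x * f x), iidWeight_cons, mul_sum]
  rw [sum_comm]
  simp only [mul_left_comm, mul_assoc]

theorem iidMean_apply (hw : w ∈ stdSimplex ℝ κ) (k : Fin n) (F : κ → ℝ) :
    iidMean w (fun x => F (x k)) = ∑ a, w a * F a := by
  have h (x : Fin n → κ) : iidWeight w x * F (x k)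
      = ∏ i, (if i = k then w (x i) * F (x i) else w (x i)) := by
    calc iidWeight w x * F (x k) = ∏ i, w (x i) * (if i = k then F (x i) else 1) := by
          rw [prod_mul_distrib, prod_ite_eq', if_pos (mem_univ k), iidWeight]
      _ = _ := prod_congr rfl fun i _ => by split_ifs <;> simp
  rw [iidMean, Finset.sum_congr rfl fun x _ => h x,
    ← Fintype.prod_sum fun i a => if i = k then w a * F a else w a]
  simp [hw.2]

theorem iidMean_sum {ι : Type*} (s : Finset ι) (f : ι → (Fin n → κ) → ℝ) :
    iidMean w (fun x => ∑ i ∈ s, f i x) = ∑ i ∈ s, iidMean w (f i) := by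
  simp only [iidMean, mul_sum]
  exact sum_comm

theorem iidMean_mono (hw : w ∈ stdSimplex ℝ κ) {f g : (Fin n → κ) → ℝ} (h : ∀ x, f x ≤ g x) :
    iidMean w f ≤ iidMean w g :=
  sum_le_sum fun x _ => mul_le_mul_of_nonneg_left (h x) ((iidWeight_mem_stdSimplex hw).1 x)

theorem iidMean_mul_const (f : (Fin n → κ) → ℝ) (r : ℝ) :
    iidMean w (fun x => f x * r) = iidMean w f * r := by
  simp [iidMean, sum_mul, mul_assoc]

/-- One-sided, but symmetric in effect: `x` and `Function.update x k a` can be exchanged. -/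
def HasBoundedDifferences (f : (Fin n → κ) → ℝ) (c : ℝ) : Prop :=
  ∀ x k a, f (Function.update x k a) ≤ f x + c

theorem HasBoundedDifferences.sum_cons (hw : w ∈ stdSimplex ℝ κ)
    {f : (Fin (n + 1) → κ) → ℝ} {c : ℝ} (hf : HasBoundedDifferences f c) :
    HasBoundedDifferences (fun y => ∑ a, w a * f (Fin.cons a y)) c := by
  intro y k b
  calc ∑ a, w a * f (Fin.cons a (Function.update y k b))
      ≤ ∑ a, w a * (f (Fin.cons a y) + c) := by
        gcongr with a
        · exact hw.1 a
        · rw [Fin.cons_update]; exact hf _ _ _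
    _ = ∑ a, w a * f (Fin.cons a y) + c := by
        simp only [mul_add, sum_add_distrib, ← sum_mul, hw.2, one_mul]

theorem iidMean_exp_le (hw : w ∈ stdSimplex ℝ κ) {c : ℝ} (s : ℝ) {f : (Fin n → κ) → ℝ}
    (hf : HasBoundedDifferences f c) :
    iidMean w (fun x => exp (s * (f x - iidMean w f))) ≤ exp (n * c ^ 2 * s ^ 2 / 8) := by
  induction n with
  | zero => simp [iidMean, iidWeight]
  | succ n ih =>
    set g : (Fin n → κ) → ℝ := fun y => ∑ a, w a * f (Fin.cons a y)
    have : Nonempty κ := (nonempty_of_sum_ne_zero (hw.2 ▸ one_ne_zero)).to_type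
    have hoeffding (y : Fin n → κ) :
        ∑ a, w a * exp (s * (f (Fin.cons a y) - g y)) ≤ exp (c ^ 2 * s ^ 2 / 8) := by
      obtain ⟨a₀, ha₀⟩ := Finite.exists_min fun a => f (Fin.cons a y)
      convert sum_mul_exp_le_of_mem_Icc_of_sum_mul_eq_zero hw (A := f (Fin.cons a₀ y) - g y)
        (B := f (Fin.cons a₀ y) - g y + c) (fun a => ⟨?_, ?_⟩) ?_ s using 3
      · ring
      · linarith [ha₀ a]
      · have := hf (Fin.cons a₀ y) 0 a
        rw [Fin.update_cons_zero] at this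
        linarith
      · simp [g, mul_sub, sum_sub_distrib, ← sum_mul, hw.2]
    calc iidMean w (fun x => exp (s * (f x - iidMean w f)))
        = iidMean w (fun y => exp (s * (g y - iidMean w g))
            * ∑ a, w a * exp (s * (f (Fin.cons a y) - g y))) := by
          rw [iidMean_eq_iidMean_sum_cons, ← iidMean_eq_iidMean_sum_cons f]
          congr 1; ext y
          rw [mul_sum]
          refine sum_congr rfl fun a _ => ?_
          rw [mul_left_comm, ← exp_add]
          congr 2
          ring
      _ ≤ iidMean w (fun y => exp (s * (g y - iidMean w g)) * exp (c ^ 2 * s ^ 2 / 8)) :=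
          iidMean_mono hw fun y => mul_le_mul_of_nonneg_left (hoeffding y) (exp_pos _).le
      _ ≤ exp (n * c ^ 2 * s ^ 2 / 8) * exp (c ^ 2 * s ^ 2 / 8) := by
          rw [iidMean_mul_const]
          exact mul_le_mul_of_nonneg_right (ih (hf.sum_cons hw)) (exp_pos _).le
      _ = exp ((n + 1 : ℕ) * c ^ 2 * s ^ 2 / 8) := by
          rw [← exp_add]
          push_cast
          congr 1
          ring

theorem sum_iidWeight_ge_le_of_hasBoundedDifferences (hw : w ∈ stdSimplex ℝ κ)
    {f : (Fin n → κ) → ℝ} {c : ℝ} (hf : HasBoundedDifferences f c) (hn : 0 < n) (hc : 0 < c)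
    {t : ℝ} (ht : 0 ≤ t) :
    ∑ x with iidMean w f + t ≤ f x, iidWeight w x ≤ exp (-2 * t ^ 2 / (n * c ^ 2)) := by
  set s := 4 * t / (n * c ^ 2)
  have hW := (iidWeight_mem_stdSimplex (n := n) hw).1
  calc ∑ x with iidMean w f + t ≤ f x, iidWeight w x
      ≤ ∑ x with iidMean w f + t ≤ f x,
          iidWeight w x * exp (s * (f x - iidMean w f) - s * t) := by
        refine sum_le_sum fun x hx => le_mul_of_one_le_right (hW x) (one_le_exp ?_)
        have := (mem_filter.1 hx).2
        rw [← mul_sub]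
        exact mul_nonneg (by positivity) (by linarith)
    _ ≤ ∑ x, iidWeight w x * exp (s * (f x - iidMean w f) - s * t) :=
        sum_le_sum_of_subset_of_nonneg (filter_subset _ _)
          fun x _ _ => mul_nonneg (hW x) (exp_pos _).le
    _ = iidMean w (fun x => exp (s * (f x - iidMean w f))) * exp (-(s * t)) := by
        rw [← iidMean_mul_const]
        simp only [iidMean, ← exp_add, sub_eq_add_neg]
    _ ≤ exp (n * c ^ 2 * s ^ 2 / 8) * exp (-(s * t)) :=
        mul_le_mul_of_nonneg_right (iidMean_exp_le hw s hf) (exp_pos _).le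
    _ = exp (-2 * t ^ 2 / (n * c ^ 2)) := by
        rw [← exp_add]
        congr 1
        simp only [s]
        field_simp
        ring

end IidWeight

theorem negMulLog_natCast_div (j n : ℕ) :
    negMulLog (j / n) = (j * log n - j * log j) / n := by
  rcases eq_or_ne j 0 with rfl | hj
  · simp
  rcases eq_or_ne n 0 with rfl | hn
  · simp
  rw [negMulLog, log_div (by exact_mod_cast hj) (by exact_mod_cast hn)]
  ring

theorem mul_log_succ_sub_mul_log_le (j : ℕ) :
    (j + 1) * log (j + 1) - j * log j ≤ 2 * log (j + 1) := by
  rcases eq_or_ne j 0 with rfl | hj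
  · simp
  have hj1 : (1 : ℝ) ≤ j := by exact_mod_cast Nat.one_le_iff_ne_zero.2 hj
  -- `j` is the convex combination `((j - 1) / j) • (j + 1) + (1 / j) • 1`
  have h := strictConcaveOn_log_Ioi.concaveOn.2 (Set.mem_Ioi.2 (by positivity : (0:ℝ) < j + 1))
    (Set.mem_Ioi.2 one_pos) (div_nonneg (sub_nonneg.2 hj1) (by positivity) : (0:ℝ) ≤ (j - 1) / j)
    (by positivity : (0:ℝ) ≤ 1 / j) (by field_simp; ring)
  have harg : ((j - 1) / j : ℝ) • ((j + 1 : ℝ)) + (1 / j : ℝ) • (1 : ℝ) = j := by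
    simp only [smul_eq_mul]; field_simp; ring
  rw [harg, smul_eq_mul, smul_eq_mul, log_one, mul_zero, add_zero, div_mul_eq_mul_div,
    div_le_iff₀ (by positivity)] at h
  linarith

theorem abs_negMulLog_succ_div_sub_le {j n : ℕ} (hj : j < n) :
    |negMulLog ((j + 1 : ℕ) / n) - negMulLog (j / n)| ≤ log n / n := by
  have hn : (0 : ℝ) < n := by exact_mod_cast (j.zero_le.trans_lt hj)
  have hD := mul_log_succ_sub_mul_log_le j
  have hD0 : j * log j ≤ (j + 1) * log (j + 1) := by
    rcases eq_or_ne j 0 with rfl | hj0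
    · simp
    gcongr <;> linarith
  have hlog : log (j + 1) ≤ log n := log_le_log (by positivity) (by exact_mod_cast hj)
  rw [negMulLog_natCast_div, negMulLog_natCast_div, ← sub_div, abs_div, abs_of_pos hn]
  gcongr
  push_cast
  rw [abs_le]
  constructor <;> nlinarith

theorem card_filter_univ_eq_card_filter_erase_add {ι : Type*} [Fintype ι] [DecidableEq ι]
    (p : ι → Prop) [DecidablePred p] (k : ι) :
    #{j | p j} = #{j ∈ univ.erase k | p j} + if p k then 1 else 0 := by
  rw [card_filter, card_filter, ← add_sum_erase _ _ (mem_univ k), add_comm]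

section EmpiricalEntropy

variable {κ : Type*} [Fintype κ] [DecidableEq κ] {n : ℕ} {w : κ → ℝ}

noncomputable def empiricalEntropy (x : Fin n → κ) : ℝ := ∑ i, negMulLog (#{k | x k = i} / n)

theorem empiricalEntropy_eq_add (x : Fin n → κ) (k : Fin n) :
    empiricalEntropy x = ∑ i, negMulLog (#{j ∈ univ.erase k | x j = i} / n)
      + (negMulLog ((#{j ∈ univ.erase k | x j = x k} + 1 : ℕ) / n)
        - negMulLog (#{j ∈ univ.erase k | x j = x k} / n)) := by
  have h (i : κ) : negMulLog (#{j | x j = i} / n)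
      = negMulLog (#{j ∈ univ.erase k | x j = i} / n)
        + if x k = i then negMulLog ((#{j ∈ univ.erase k | x j = i} + 1 : ℕ) / n)
          - negMulLog (#{j ∈ univ.erase k | x j = i} / n) else 0 := by
    rw [card_filter_univ_eq_card_filter_erase_add _ k]
    split_ifs <;> simp
  simp only [empiricalEntropy, h, sum_add_distrib, sum_ite_eq, mem_univ, if_true]

theorem hasBoundedDifferences_empiricalEntropy :
    HasBoundedDifferences (empiricalEntropy : (Fin n → κ) → ℝ) (2 * log n / n) := by
  intro x k a
  have hcount (i : κ) : #{j ∈ univ.erase k | Function.update x k a j = i}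
      = #{j ∈ univ.erase k | x j = i} :=
    congrArg card <| filter_congr fun j hj => by rw [Function.update_of_ne (ne_of_mem_erase hj)]
  have hlt (i : κ) : #{j ∈ univ.erase k | x j = i} < n :=
    (card_filter_le _ _).trans_lt (by
      rw [card_erase_of_mem (mem_univ k), card_univ, Fintype.card_fin]
      exact Nat.sub_lt k.pos one_pos)
  have ha := abs_le.1 (abs_negMulLog_succ_div_sub_le (hlt a))
  have hxk := abs_le.1 (abs_negMulLog_succ_div_sub_le (hlt (x k)))
  rw [empiricalEntropy_eq_add (Function.update x k a) k, empiricalEntropy_eq_add x k]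
  simp only [hcount, Function.update_self]
  have : 2 * log n / n = log n / n + log n / n := by ring
  linarith [ha.1, ha.2, hxk.1, hxk.2]

theorem iidMean_card_filter_div (hw : w ∈ stdSimplex ℝ κ) (hn : n ≠ 0) (i : κ) :
    iidMean w (fun x : Fin n → κ => (#{k | x k = i} : ℝ) / n) = w i := by
  simp only [card_filter, Nat.cast_sum, Nat.cast_ite, Nat.cast_one, Nat.cast_zero, div_eq_mul_inv,
    iidMean_mul_const, iidMean_sum, iidMean_apply hw _ fun a => if a = i then (1 : ℝ) else 0]
  field_simp
  simp

theorem iidMean_empiricalEntropy_le (hw : w ∈ stdSimplex ℝ κ) (hn : n ≠ 0) :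
    iidMean w (empiricalEntropy : (Fin n → κ) → ℝ) ≤ ∑ i, negMulLog (w i) := by
  unfold empiricalEntropy
  rw [iidMean_sum]
  refine sum_le_sum fun i _ => ?_
  have hW := iidWeight_mem_stdSimplex (n := n) hw
  have := concaveOn_negMulLog.le_map_sum (t := univ) (fun x _ => hW.1 x) hW.2
    (p := fun x : Fin n → κ => (#{k | x k = i} : ℝ) / n) (fun x _ => Set.mem_Ici.2 (by positivity))
  rw [← iidMean_card_filter_div hw hn i]
  simpa only [smul_eq_mul, iidMean] using this

theorem sum_iidWeight_empiricalEntropy_ge_le (hw : w ∈ stdSimplex ℝ κ) (hn : 2 ≤ n) {t : ℝ}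
    (ht : 0 ≤ t) :
    ∑ x : Fin n → κ with ∑ i, negMulLog (w i) + t ≤ empiricalEntropy x, iidWeight w x
      ≤ exp (-(n * t ^ 2) / (2 * log n ^ 2)) := by
  have hlog : 0 < log n := log_pos (by exact_mod_cast hn)
  calc ∑ x with ∑ i, negMulLog (w i) + t ≤ empiricalEntropy x, iidWeight w x
      ≤ ∑ x with iidMean w empiricalEntropy + t ≤ empiricalEntropy x, iidWeight w x := by
        refine sum_le_sum_of_subset_of_nonneg (monotone_filter_right _ fun x _ hx => ?_)
          fun x _ _ => (iidWeight_mem_stdSimplex hw).1 x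
        linarith [iidMean_empiricalEntropy_le hw (n := n) (by omega)]
    _ ≤ exp (-2 * t ^ 2 / (n * (2 * log n / n) ^ 2)) :=
        sum_iidWeight_ge_le_of_hasBoundedDifferences hw hasBoundedDifferences_empiricalEntropy
          (by omega) (by positivity) ht
    _ = exp (-(n * t ^ 2) / (2 * log n ^ 2)) := by
        congr 1
        field_simp

end EmpiricalEntropy

theorem neg_sum_mul_logb_eq_sum_negMulLog_div {ι : Type*} (s : Finset ι) (q : ι → ℝ) (b : ℝ) :
    -∑ i ∈ s, q i * logb b (q i) = (∑ i ∈ s, negMulLog (q i)) / log b := by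
  simp only [negMulLog, logb, sum_div, ← sum_neg_distrib]
  exact sum_congr rfl fun i _ => by ring

section Sampling

variable {Ω κ : Type*} [MeasurableSpace Ω] {μ : Measure Ω} [MeasurableSpace κ]
  [MeasurableSingletonClass κ]

theorem measureReal_preimage_singleton_mem_stdSimplex [IsProbabilityMeasure μ] [Fintype κ]
    {Y : Ω → κ} (hY : Measurable Y) : (fun i => μ.real (Y ⁻¹' {i})) ∈ stdSimplex ℝ κ :=
  ⟨fun _ => measureReal_nonneg, by
    rw [sum_measureReal_preimage_singleton _ fun i _ => hY (measurableSet_singleton i)]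
    simp⟩

theorem measure_tuple_mem_eq_ofReal_sum_iidWeight [IsFiniteMeasure μ] {n : ℕ} {U : Fin n → Ω → κ}
    (hU : ∀ k, Measurable (U k)) (hindep : iIndepFun U μ) {w : κ → ℝ}
    (hw : ∀ k i, μ.real (U k ⁻¹' {i}) = w i) (S : Finset (Fin n → κ)) :
    μ {ω | (fun k => U k ω) ∈ S} = ENNReal.ofReal (∑ x ∈ S, iidWeight w x) := by
  have hV : Measurable fun ω k => U k ω := measurable_pi_lambda _ hU
  have hw0 (x : Fin n → κ) : 0 ≤ iidWeight w x :=
    prod_nonneg fun k _ => hw k (x k) ▸ measureReal_nonneg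
  have hfiber (x : Fin n → κ) :
      μ ((fun ω k => U k ω) ⁻¹' {x}) = ENNReal.ofReal (iidWeight w x) := by
    have : (fun ω k => U k ω) ⁻¹' {x} = ⋂ k ∈ univ, U k ⁻¹' {x k} := by
      ext; simp [funext_iff]
    rw [this, hindep.measure_inter_preimage_eq_mul _ fun k _ => measurableSet_singleton _,
      iidWeight, ENNReal.ofReal_prod_of_nonneg fun k _ => hw k (x k) ▸ measureReal_nonneg]
    exact prod_congr rfl fun k _ => by rw [← hw k (x k), ofReal_measureReal]
  rw [ENNReal.ofReal_sum_of_nonneg fun x _ => hw0 x,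
    ← sum_congr rfl fun x _ => hfiber x,
    sum_measure_preimage_singleton S fun x _ => hV (measurableSet_singleton x)]
  rfl

end Sampling

theorem entropy_lower_bound_from_empirical_general
    {Ω : Type*} [MeasurableSpace Ω] (μ : Measure Ω) [IsProbabilityMeasure μ]
    (m n : ℕ) (hn : 2 ≤ n)
    (U : Fin n → Ω → Fin m)
    (hmeas : ∀ k, Measurable (U k))
    (hindep : iIndepFun U μ)
    (p : Fin m → ℝ) (hp : ∀ k i, (μ {ω | U k ω = i}).toReal = p i)
    (phat : Fin m → Ω → ℝ)
    (hphat : ∀ i ω, phat i ω = ((Finset.univ.filter fun k => U k ω = i).card : ℝ) / n)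
    (Hmle : Ω → ℝ)
    (hHmle : ∀ ω, Hmle ω = -∑ i : Fin m, phat i ω * Real.logb 2 (phat i ω))
    (ε : ℝ) (hε₀ : 0 < ε) (hε₁ : ε ≤ 1) :
    μ {ω | -∑ i : Fin m, p i * Real.logb 2 (p i)
          ≤ Hmle ω - Real.sqrt (2 * (Real.logb 2 n) ^ 2 * Real.log (2 / ε) / n)}
      ≤ ENNReal.ofReal ε := by
  set t := Real.sqrt (2 * (Real.logb 2 n) ^ 2 * Real.log (2 / ε) / n)
  have hlog2 : 0 < log 2 := log_pos one_lt_two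
  have hpw : p ∈ stdSimplex ℝ (Fin m) :=
    funext (hp ⟨0, by omega⟩) ▸ measureReal_preimage_singleton_mem_stdSimplex (hmeas _)
  have hevent : {ω | -∑ i, p i * logb 2 (p i) ≤ Hmle ω - t} = {ω | (fun k => U k ω) ∈
      ({x | ∑ i, negMulLog (p i) + t * log 2 ≤ empiricalEntropy x} : Finset _)} := by
    ext ω
    simp only [Set.mem_ofPred_eq, mem_filter, mem_univ, true_and, hHmle, hphat,
      neg_sum_mul_logb_eq_sum_negMulLog_div, le_sub_iff_add_le, div_add' _ _ _ hlog2.ne',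
      div_le_div_iff_of_pos_right hlog2]
    rfl
  have hexp : exp (-(n * (t * log 2) ^ 2) / (2 * log n ^ 2)) = ε / 2 := by
    have hlogn : 0 < log n := log_pos (by exact_mod_cast hn)
    have hlogε : 0 ≤ log (2 / ε) := log_nonneg (by rw [le_div_iff₀ hε₀]; linarith)
    have : -(n * (t * log 2) ^ 2) / (2 * log n ^ 2) = -log (2 / ε) := by
      rw [mul_pow, sq_sqrt (by positivity), logb]
      field_simp
    rw [this, exp_neg, exp_log (by positivity), inv_div]
  calc _ = μ {ω | (fun k => U k ω) ∈
        ({x | ∑ i, negMulLog (p i) + t * log 2 ≤ empiricalEntropy x} : Finset _)} := by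
        rw [hevent]
    _ = ENNReal.ofReal (∑ x with ∑ i, negMulLog (p i) + t * log 2 ≤ empiricalEntropy x,
          iidWeight p x) := measure_tuple_mem_eq_ofReal_sum_iidWeight hmeas hindep hp _
    _ ≤ ENNReal.ofReal ε := ENNReal.ofReal_le_ofReal <| by
        linarith [sum_iidWeight_empiricalEntropy_ge_le hpw hn (by positivity : 0 ≤ t * log 2)]

/-- **Observable lower bound on the Shannon entropy from the empirical entropy.**
For `n ≥ 2` i.i.d. samples from a distribution `p` on a finite alphabet of size `m`, with
empirical entropy `Ĥ_MLE` and Shannon entropy `H(p) = -∑ᵢ pᵢ log₂ pᵢ`, for every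
`ε ∈ (0, 1]`, `Pr[H(p) ≤ Ĥ_MLE - √(2 (log₂ n)² ln(2/ε) / n)] ≤ ε`. -/
theorem entropy_lower_bound_from_empirical
    {Ω : Type*} [MeasurableSpace Ω] (μ : Measure Ω) [IsProbabilityMeasure μ]
    (m n : ℕ) (hm : 1 ≤ m) (hn : 2 ≤ n)
    (U : Fin n → Ω → Fin m)
    (hmeas : ∀ k, Measurable (U k))
    (hindep : iIndepFun U μ)
    (p : Fin m → ℝ) (hp : ∀ k i, (μ {ω | U k ω = i}).toReal = p i)
    (phat : Fin m → Ω → ℝ)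
    (hphat : ∀ i ω, phat i ω = ((Finset.univ.filter fun k => U k ω = i).card : ℝ) / n)
    (Hmle : Ω → ℝ)
    (hHmle : ∀ ω, Hmle ω = -∑ i : Fin m, phat i ω * Real.logb 2 (phat i ω))
    (ε : ℝ) (hε₀ : 0 < ε) (hε₁ : ε ≤ 1) :
    μ {ω | -∑ i : Fin m, p i * Real.logb 2 (p i)
          ≤ Hmle ω - Real.sqrt (2 * (Real.logb 2 n) ^ 2 * Real.log (2 / ε) / n)}
      ≤ ENNReal.ofReal ε :=
  entropy_lower_bound_from_empirical_general μ m n hn U hmeas hindep p hp phat hphat Hmle hHmle ε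
    hε₀ hε₁
end
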